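/- Let r ≥ 0, θ ∈ ℝ, c, d ∈ ℝ and let f(z) = z³ − 3·r·exp(θ·i)·z + 2(c + d·i). Then there exists z ∈ ℂ with Im(f(z)) = 0 and f'(z) = 0 if and only if d² = r³·sin²(3θ/2). In particular this condition is independent of c. -/

import Mathlib

/-!
The critical points of `z³ - 3w²z + b` are `±w`, where the cubic takes the values `b ∓ 2w³`.
So some critical value is real iff `Im b = ±2 Im(w³)`, i.e. `(Im b)² = 4 (Im w³)²`. For
`3w² = 3r e^{iθ}` take `w = √r e^{iθ/2}`; then `Im(w³) = r^{3/2} sin(3θ/2)`.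
-/

open Complex

theorem hasDerivAt_cubic_sub_mul_add (a b z : ℂ) :
    HasDerivAt (fun z : ℂ => z ^ 3 - a * z + b) (3 * z ^ 2 - a) z := by
  simpa using ((hasDerivAt_pow 3 z).sub ((hasDerivAt_id z).const_mul a)).add_const b

theorem deriv_cubic_sub_three_sq_mul_eq_zero_iff (w b z : ℂ) :
    deriv (fun z : ℂ => z ^ 3 - 3 * w ^ 2 * z + b) z = 0 ↔ z = w ∨ z = -w := by
  rw [(hasDerivAt_cubic_sub_mul_add _ b z).deriv, ← sq_eq_sq_iff_eq_or_eq_neg]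
  constructor <;> intro h
  · linear_combination h / 3
  · linear_combination 3 * h

theorem exists_im_eq_zero_and_deriv_eq_zero_iff (w b : ℂ) (f : ℂ → ℂ)
    (hf : f = fun z => z ^ 3 - 3 * w ^ 2 * z + b) :
    (∃ z, (f z).im = 0 ∧ deriv f z = 0) ↔ b.im ^ 2 = (2 * (w ^ 3).im) ^ 2 := by
  have value_at_w : (f w).im = b.im - 2 * (w ^ 3).im := by
    simp [hf, show w ^ 3 - 3 * w ^ 2 * w + b = b - 2 * w ^ 3 by ring]
  have value_at_neg_w : (f (-w)).im = b.im + 2 * (w ^ 3).im := by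
    simp [hf, show (-w) ^ 3 - 3 * w ^ 2 * -w + b = b + 2 * w ^ 3 by ring]
  subst hf
  simp_rw [deriv_cubic_sub_three_sq_mul_eq_zero_iff, sq_eq_sq_iff_eq_or_eq_neg]
  constructor
  · rintro ⟨z, hz, rfl | rfl⟩
    · exact .inl (by linarith)
    · exact .inr (by linarith)
  · rintro (h | h)
    · exact ⟨w, by linarith, .inl rfl⟩
    · exact ⟨-w, by linarith, .inr rfl⟩

theorem ofReal_mul_exp_mul_I_pow (ρ φ : ℝ) (n : ℕ) :
    ((ρ : ℂ) * exp (φ * I)) ^ n = ((ρ ^ n : ℝ) : ℂ) * exp ((n * φ : ℝ) * I) := by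
  rw [mul_pow, ← exp_nat_mul]
  push_cast
  ring_nf

theorem im_ofReal_mul_exp_mul_I_pow (ρ φ : ℝ) (n : ℕ) :
    (((ρ : ℂ) * exp (φ * I)) ^ n).im = ρ ^ n * Real.sin (n * φ) := by
  rw [ofReal_mul_exp_mul_I_pow, im_ofReal_mul, exp_ofReal_mul_I_im]

/-- For `f(z) = z³ - 3·r·exp(θi)·z + 2(c + di)` with `r ≥ 0`: the imaginary component
`I(f)` is singular (i.e. some point of `I(f)` is a critical point of `f`) iff
`d² = r³ sin²(3θ/2)`; the condition does not involve `c`. -/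
theorem stmt10 (r θ c d : ℝ) (hr : 0 ≤ r) (f : ℂ → ℂ)
    (hf : ∀ z : ℂ, f z = z ^ 3 - 3 * (r : ℂ) * Complex.exp ((θ : ℂ) * Complex.I) * z
        + 2 * ((c : ℂ) + (d : ℂ) * Complex.I)) :
    (∃ z : ℂ, (f z).im = 0 ∧ deriv f z = 0) ↔
      d ^ 2 = r ^ 3 * Real.sin (3 * θ / 2) ^ 2 := by
  set w : ℂ := ((√r : ℝ) : ℂ) * exp (((θ / 2 : ℝ) : ℂ) * I)
  have hw2 : (r : ℂ) * exp (θ * I) = w ^ 2 := by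
    rw [ofReal_mul_exp_mul_I_pow, Real.sq_sqrt hr]
    push_cast
    ring_nf
  have hw3 : (w ^ 3).im = √r ^ 3 * Real.sin (3 * θ / 2) := by
    rw [im_ofReal_mul_exp_mul_I_pow]
    ring_nf
  have hr3 : (√r ^ 3) ^ 2 = r ^ 3 := by rw [← pow_mul, mul_comm, pow_mul, Real.sq_sqrt hr]
  rw [exists_im_eq_zero_and_deriv_eq_zero_iff w _ f (funext fun z => by rw [hf, mul_assoc 3, hw2]),
    hw3]
  simp only [mul_im, ofReal_re, ofReal_im, I_re, I_im, add_im, re_ofNat, im_ofNat, mul_one,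
    mul_zero, zero_mul, add_zero, zero_add, mul_pow, hr3]
  constructor <;> intro h <;> linarith
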